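/- If the LP min θ s.t. Σ_{j∈E∖{k}} λ_j x_{lj} ≤ θ x_{lk}, Σ_{j∈E∖{k}} λ_j x_{ij} ≤ x_{ik} (i ≠ l), Σ_{j∈E∖{k}} λ_j y_{rj} ≥ y_{rk}, λ ≥ 0 is feasible and its optimal value θ* were ≤ 1 while DMU_k is extreme and CCR-efficient, a contradiction follows: θ* < 1 would yield a point of T dominating DMU_k, and θ* = 1 with DMU_k extreme would make DMU_k a nonnegative combination of the other efficient DMUs. Hence θ* > 1 for every extreme CCR-efficient DMU_k for which the LP is feasible. -/

import Mathlib

/-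
A feasible point of (5) with `θ ≤ 1` is a combination of the efficient DMUs other than `k`
using no more of any input and producing at least every output of `DMU_k`. Read as a point
of `T` (weight `0` on `k`) it cannot dominate `DMU_k`, so it reproduces `DMU_k` exactly,
which contradicts extremality.
-/

/-- Feasibility of the input-oriented super-efficiency model (5). -/
def Feas5 {n m s : ℕ} (X : Fin n → Fin m → ℝ) (Y : Fin n → Fin s → ℝ)
    (E : Finset (Fin n)) (k : Fin n) (li : Fin m) (θ : ℝ) (l : Fin n → ℝ) : Prop :=
  (∀ j, 0 ≤ l j) ∧
  (∑ j ∈ E.erase k, l j * X j li ≤ θ * X k li) ∧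
  (∀ i, i ≠ li → ∑ j ∈ E.erase k, l j * X j i ≤ X k i) ∧
  (∀ r, Y k r ≤ ∑ j ∈ E.erase k, l j * Y j r)

open Finset

theorem Finset.sum_update_zero_mul {ι R : Type*} [DecidableEq ι] [NonUnitalNonAssocSemiring R]
    (s : Finset ι) (l f : ι → R) (k : ι) :
    ∑ j ∈ s, Function.update l k 0 j * f j = ∑ j ∈ s.erase k, l j * f j := by
  rw [← sum_erase s (show Function.update l k 0 k * f k = 0 by simp)]
  exact sum_congr rfl fun j hj => by rw [Function.update_of_ne (ne_of_mem_erase hj)]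

theorem Feas5.input_le_of_le_one {n m s : ℕ} {X : Fin n → Fin m → ℝ} {Y : Fin n → Fin s → ℝ}
    {E : Finset (Fin n)} {k : Fin n} {li : Fin m} {θ : ℝ} {l : Fin n → ℝ}
    (h : Feas5 X Y E k li θ l) (hθ : θ ≤ 1) (hXk : 0 ≤ X k li) (i : Fin m) :
    ∑ j ∈ E.erase k, l j * X j i ≤ X k i := by
  obtain ⟨-, hli, hother, -⟩ := h
  rcases eq_or_ne i li with rfl | hi
  · calc _ ≤ θ * X k i := hli
      _ ≤ 1 * X k i := mul_le_mul_of_nonneg_right hθ hXk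
      _ = X k i := one_mul _
  · exact hother i hi

theorem extreme_efficient_feasible_implies_gt_one_general
    {n m s : ℕ} (X : Fin n → Fin m → ℝ) (Y : Fin n → Fin s → ℝ)
    (hX : ∀ j i, 0 < X j i)
    (E : Finset (Fin n)) (k : Fin n) (li : Fin m)
    -- DMU_k is CCR-efficient: non-dominated in the PPS generated by E
    (heff : ¬ ∃ l : Fin n → ℝ, (∀ j, 0 ≤ l j) ∧
      (∀ i, ∑ j ∈ E, l j * X j i ≤ X k i) ∧
      (∀ r, Y k r ≤ ∑ j ∈ E, l j * Y j r) ∧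
      ¬ ((∀ i, ∑ j ∈ E, l j * X j i = X k i) ∧ (∀ r, ∑ j ∈ E, l j * Y j r = Y k r)))
    -- DMU_k is extreme
    (hextreme : ¬ ∃ l : Fin n → ℝ, (∀ j, 0 ≤ l j) ∧
      (∀ i, ∑ j ∈ E.erase k, l j * X j i = X k i) ∧
      (∀ r, ∑ j ∈ E.erase k, l j * Y j r = Y k r)) :
    ∀ (θ : ℝ) (l : Fin n → ℝ), Feas5 X Y E k li θ l → 1 < θ := by
  intro θ l hfeas
  by_contra! hθ
  have hin := hfeas.input_le_of_le_one hθ (hX k li).le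
  obtain ⟨hl0, -, -, hout⟩ := hfeas
  have hl0' : (0 : Fin n → ℝ) ≤ Function.update l k 0 :=
    le_update_iff.mpr ⟨le_rfl, fun j _ => hl0 j⟩
  have hexact : (∀ i, ∑ j ∈ E, Function.update l k 0 j * X j i = X k i) ∧
      (∀ r, ∑ j ∈ E, Function.update l k 0 j * Y j r = Y k r) := by
    by_contra hne
    exact heff ⟨_, hl0', by simpa only [sum_update_zero_mul] using hin,
      by simpa only [sum_update_zero_mul] using hout, hne⟩
  simp only [sum_update_zero_mul] at hexact
  exact hextreme ⟨l, hl0, hexact⟩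

/-- For every extreme CCR-efficient `DMU_k` for which the super-efficiency LP (5) at
input `li` is feasible, its optimal value is `θ* > 1`: every feasible radial value
exceeds 1. -/
theorem extreme_efficient_feasible_implies_gt_one
    {n m s : ℕ} (X : Fin n → Fin m → ℝ) (Y : Fin n → Fin s → ℝ)
    (hX : ∀ j i, 0 < X j i) (hY : ∀ j r, 0 < Y j r)
    (E : Finset (Fin n)) (k : Fin n) (hk : k ∈ E) (li : Fin m)
    -- DMU_k is CCR-efficient: non-dominated in the PPS generated by E
    (heff : ¬ ∃ l : Fin n → ℝ, (∀ j, 0 ≤ l j) ∧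
      (∀ i, ∑ j ∈ E, l j * X j i ≤ X k i) ∧
      (∀ r, Y k r ≤ ∑ j ∈ E, l j * Y j r) ∧
      ¬ ((∀ i, ∑ j ∈ E, l j * X j i = X k i) ∧ (∀ r, ∑ j ∈ E, l j * Y j r = Y k r)))
    -- DMU_k is extreme
    (hextreme : ¬ ∃ l : Fin n → ℝ, (∀ j, 0 ≤ l j) ∧
      (∀ i, ∑ j ∈ E.erase k, l j * X j i = X k i) ∧
      (∀ r, ∑ j ∈ E.erase k, l j * Y j r = Y k r))
    (hfeas : ∃ (θ : ℝ) (l : Fin n → ℝ), Feas5 X Y E k li θ l) :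
    ∀ (θ : ℝ) (l : Fin n → ℝ), Feas5 X Y E k li θ l → 1 < θ :=
  extreme_efficient_feasible_implies_gt_one_general X Y hX E k li heff hextreme
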